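/- Let 0 < α < 1, τ > 0, and let y : ℕ → ℝ be any sequence (a grid function on the grid t_j = jτ). Then for every j ≥ 0: y^{j} · Δ_{0t_j}^α y ≥ (1/2) · Δ_{0t_j}^α (y²) − (τ^α Γ(2−α)/(2(2 − 2^{1−α}))) · (Δ_{0t_j}^α y)², where Δ_{0t_j}^α (y²) denotes the same discrete operator applied to the sequence j ↦ (y^j)². -/

import Mathlib

/-- The discrete analogue of the Caputo fractional derivative of order `α`
on the uniform grid `t_j = jτ`:
`Δ_{0t_j}^α y = (1/Γ(2-α)) Σ_{s=0}^{j} (t_{j-s+1}^{1-α} − t_{j-s}^{1-α}) (y^{s+1} − y^s)/τ`. -/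
noncomputable def dCaputo (α τ : ℝ) (y : ℕ → ℝ) (j : ℕ) : ℝ :=
  (1 / Real.Gamma (2 - α)) *
    ∑ s ∈ Finset.range (j + 1),
      (((((j : ℕ) - s + 1 : ℕ) : ℝ) * τ) ^ (1 - α) -
        ((((j : ℕ) - s : ℕ) : ℝ) * τ) ^ (1 - α)) * (y (s + 1) - y s) / τ

/-!
The operator is `L y = Σ_{s ≤ j} w_s (y_{s+1} - y_s)` with weights `w_s` nondecreasing in `s`
(by concavity of `t ↦ t^{1-α}`). Since `y_j L y - L(y²)/2 = -L((y - y_j)²)/2`, one studies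
`u = y - y_j`, which vanishes at `j`. Summation by parts gives `L u = w_j x - A` and
`L u² = w_j x² - B`, where `x = u_{j+1}`, `A = Σ_{s<j} δ_s u_s`, `B = Σ_{s<j} δ_s u_s²` and the
`δ_s ≥ 0` are the backward differences of `w`, summing to `w_{j-1}`. Cauchy–Schwarz gives
`A² ≤ g B` for any `g ≥ w_{j-1}`, and if `0 < g < w_j`, minimising over `x` yields
`w_j x² - B ≤ (w_j x - A)² / (w_j - g)`. For the Caputo weights `g` is the weight of lag one
(`w_{j-1}` when `j ≥ 1`), and `1 / (w_j - g) = τ^α Γ(2-α) / (2 - 2^{1-α})`.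
-/

open Finset

def weightedDiff (w y : ℕ → ℝ) (n : ℕ) : ℝ :=
  ∑ s ∈ range n, w s * (y (s + 1) - y s)

def backwardDiff (w : ℕ → ℝ) : ℕ → ℝ
  | 0 => w 0
  | s + 1 => w (s + 1) - w s

lemma sum_range_succ_backwardDiff (w : ℕ → ℝ) (n : ℕ) :
    ∑ s ∈ range (n + 1), backwardDiff w s = w n := by
  induction n with
  | zero => simp [backwardDiff]
  | succ n ih => rw [sum_range_succ, ih, backwardDiff]; ring

namespace weightedDiff

variable (w : ℕ → ℝ)

lemma sub_const (y : ℕ → ℝ) (c : ℝ) (n : ℕ) :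
    weightedDiff w (fun s => y s - c) n = weightedDiff w y n := by
  simp only [weightedDiff, sub_sub_sub_cancel_right]

lemma sub_const_sq (y : ℕ → ℝ) (c : ℝ) (n : ℕ) :
    weightedDiff w (fun s => (y s - c) ^ 2) n =
      weightedDiff w (fun s => y s ^ 2) n - 2 * c * weightedDiff w y n := by
  simp only [weightedDiff, mul_sum, ← sum_sub_distrib]
  refine sum_congr rfl fun s _ => ?_
  ring

lemma add_sum_backwardDiff_mul (u : ℕ → ℝ) (n : ℕ) :
    weightedDiff w u n + ∑ s ∈ range n, backwardDiff w s * u s =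
      (∑ s ∈ range n, backwardDiff w s) * u n := by
  induction n with
  | zero => simp [weightedDiff]
  | succ n ih =>
    simp only [weightedDiff, sum_range_succ] at ih ⊢
    have h := sum_range_succ_backwardDiff w n
    rw [sum_range_succ] at h
    linear_combination ih - (u (n + 1) - u n) * h

lemma succ_of_eq_zero {u : ℕ → ℝ} {n : ℕ} (hu : u n = 0) :
    weightedDiff w u (n + 1) = w n * u (n + 1) - ∑ s ∈ range n, backwardDiff w s * u s := by
  have h := add_sum_backwardDiff_mul w u n
  rw [hu, mul_zero] at h
  rw [weightedDiff, sum_range_succ, ← weightedDiff, hu]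
  linarith

end weightedDiff

lemma sub_le_sq_div_of_sq_le_mul {A B W g : ℝ} (hg : 0 < g) (hgW : g < W) (hAB : A ^ 2 ≤ g * B)
    (x : ℝ) : W * x ^ 2 - B ≤ (W * x - A) ^ 2 / (W - g) := by
  rw [le_div_iff₀ (sub_pos.2 hgW)]
  have key : 0 ≤ g * ((W * x - A) ^ 2 - (W * x ^ 2 - B) * (W - g)) := by
    rw [show g * ((W * x - A) ^ 2 - (W * x ^ 2 - B) * (W - g)) =
        (W - g) * (g * B - A ^ 2) + W * (A - g * x) ^ 2 by ring]
    exact add_nonneg (mul_nonneg (by linarith) (by linarith))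
      (mul_nonneg (by linarith) (sq_nonneg _))
  linarith [nonneg_of_mul_nonneg_right key hg]

theorem half_weightedDiff_sq_sub_le {w : ℕ → ℝ} {j : ℕ} {g : ℝ} (hw0 : 0 ≤ w 0)
    (hmono : MonotoneOn w (Set.Iio j)) (hg : ∀ s < j, w s ≤ g) (hg0 : 0 < g) (hgj : g < w j)
    (y : ℕ → ℝ) :
    weightedDiff w (fun s => y s ^ 2) (j + 1) / 2 -
        weightedDiff w y (j + 1) ^ 2 / (2 * (w j - g)) ≤ y j * weightedDiff w y (j + 1) := by
  set u : ℕ → ℝ := fun s => y s - y j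
  set A := ∑ s ∈ range j, backwardDiff w s * u s
  set B := ∑ s ∈ range j, backwardDiff w s * u s ^ 2
  have hδ : ∀ s ∈ range j, 0 ≤ backwardDiff w s := by
    intro s hs
    rw [mem_range] at hs
    cases s with
    | zero => exact hw0
    | succ s =>
      exact sub_nonneg.2 (hmono (Set.mem_Iio.2 (by omega)) (Set.mem_Iio.2 hs) s.le_succ)
  have hsum : ∑ s ∈ range j, backwardDiff w s ≤ g := by
    cases j with
    | zero => simpa using hg0.le
    | succ m => rw [sum_range_succ_backwardDiff]; exact hg m m.lt_succ_self
  have hAB : A ^ 2 ≤ g * B :=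
    (sum_sq_le_sum_mul_sum_of_sq_le_mul _ hδ (fun s hs => mul_nonneg (hδ s hs) (sq_nonneg _))
      fun s _ => by rw [mul_pow, sq (backwardDiff w s), mul_assoc]).trans
      (mul_le_mul_of_nonneg_right hsum (sum_nonneg fun s hs => mul_nonneg (hδ s hs) (sq_nonneg _)))
  have hu : u j = 0 := sub_self _
  have hL : weightedDiff w y (j + 1) = w j * u (j + 1) - A := by
    rw [← weightedDiff.sub_const w y (y j)]
    exact weightedDiff.succ_of_eq_zero w hu
  have hLsq : weightedDiff w (fun s => y s ^ 2) (j + 1) =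
      2 * y j * weightedDiff w y (j + 1) + (w j * u (j + 1) ^ 2 - B) := by
    rw [← weightedDiff.succ_of_eq_zero w (u := fun s => u s ^ 2) (by simp [hu]),
      weightedDiff.sub_const_sq]
    ring
  have hx := sub_le_sq_div_of_sq_le_mul hg0 hgj hAB (u (j + 1))
  rw [hLsq, hL, ← div_div]
  calc _ = y j * (w j * u (j + 1) - A) +
        ((w j * u (j + 1) ^ 2 - B) - (w j * u (j + 1) - A) ^ 2 / (w j - g)) / 2 := by ring
    _ ≤ _ := by linarith

lemma ConcaveOn.sub_le_sub_nat_mul {f : ℝ → ℝ} (hf : ConcaveOn ℝ (Set.Ici 0) f) {h : ℝ}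
    (hh : 0 ≤ h) (k : ℕ) : f ((k + 2) * h) - f ((k + 1) * h) ≤ f ((k + 1) * h) - f (k * h) := by
  have hmid := hf.2 (x := k * h) (y := (k + 2) * h) (Set.mem_Ici.2 (by positivity))
    (Set.mem_Ici.2 (by positivity)) (by norm_num : (0 : ℝ) ≤ 1 / 2)
    (by norm_num : (0 : ℝ) ≤ 1 / 2) (by norm_num)
  simp only [smul_eq_mul] at hmid
  rw [show 1 / 2 * (k * h) + 1 / 2 * ((k + 2) * h) = (k + 1) * h by ring] at hmid
  linarith

noncomputable def caputoWeight (α τ : ℝ) (k : ℕ) : ℝ :=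
  ((((k + 1 : ℕ) : ℝ) * τ) ^ (1 - α) - (((k : ℕ) : ℝ) * τ) ^ (1 - α)) / (Real.Gamma (2 - α) * τ)

section caputoWeight

variable {α τ : ℝ}

lemma dCaputo_eq_weightedDiff (y : ℕ → ℝ) (j : ℕ) :
    dCaputo α τ y j = weightedDiff (fun s => caputoWeight α τ (j - s)) y (j + 1) := by
  simp only [dCaputo, weightedDiff, caputoWeight, mul_sum]
  refine sum_congr rfl fun s _ => ?_
  ring

lemma caputoWeight_nonneg (hα : α ≤ 1) (hτ : 0 ≤ τ) (k : ℕ) : 0 ≤ caputoWeight α τ k := by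
  have hΓ : 0 < Real.Gamma (2 - α) := Real.Gamma_pos_of_pos (by linarith)
  refine div_nonneg (sub_nonneg.2 (Real.rpow_le_rpow (by positivity) ?_ (by linarith)))
    (by positivity)
  gcongr
  simp

lemma caputoWeight_antitone (hα0 : 0 ≤ α) (hα1 : α ≤ 1) (hτ : 0 ≤ τ) :
    Antitone (caputoWeight α τ) := by
  have hΓ : 0 < Real.Gamma (2 - α) := Real.Gamma_pos_of_pos (by linarith)
  refine antitone_nat_of_succ_le fun k => div_le_div_of_nonneg_right ?_ (by positivity)
  have := (Real.concaveOn_rpow (p := 1 - α) (by linarith) (by linarith)).sub_le_sub_nat_mul hτ k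
  push_cast
  rwa [add_assoc, one_add_one_eq_two]

lemma caputoWeight_zero (hα : α < 1) (hτ : 0 < τ) :
    caputoWeight α τ 0 = 1 / (τ ^ α * Real.Gamma (2 - α)) := by
  have hΓ : 0 < Real.Gamma (2 - α) := Real.Gamma_pos_of_pos (by linarith)
  simp only [caputoWeight, Nat.cast_zero, zero_add, Nat.cast_one, one_mul, zero_mul,
    Real.zero_rpow (by linarith : (1 : ℝ) - α ≠ 0), sub_zero, Real.rpow_sub hτ, Real.rpow_one]
  field_simp

lemma caputoWeight_one (hα : α < 2) (hτ : 0 < τ) :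
    caputoWeight α τ 1 = (2 ^ (1 - α) - 1) / (τ ^ α * Real.Gamma (2 - α)) := by
  have hΓ : 0 < Real.Gamma (2 - α) := Real.Gamma_pos_of_pos (by linarith)
  simp only [caputoWeight, Nat.reduceAdd, Nat.cast_ofNat, Nat.cast_one, one_mul,
    Real.mul_rpow zero_le_two hτ.le, Real.rpow_sub hτ, Real.rpow_one]
  field_simp

lemma caputoWeight_zero_sub_one (hα : α < 1) (hτ : 0 < τ) :
    caputoWeight α τ 0 - caputoWeight α τ 1 =
      (2 - 2 ^ (1 - α)) / (τ ^ α * Real.Gamma (2 - α)) := by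
  rw [caputoWeight_zero hα hτ, caputoWeight_one (by linarith) hτ]
  ring

lemma caputoWeight_one_pos (hα : α < 1) (hτ : 0 < τ) : 0 < caputoWeight α τ 1 := by
  rw [caputoWeight_one (by linarith) hτ]
  exact div_pos (sub_pos.2 (Real.one_lt_rpow one_lt_two (by linarith)))
    (mul_pos (Real.rpow_pos_of_pos hτ α) (Real.Gamma_pos_of_pos (by linarith)))

lemma caputoWeight_one_lt_zero (hα0 : 0 < α) (hα1 : α < 1) (hτ : 0 < τ) :
    caputoWeight α τ 1 < caputoWeight α τ 0 := by
  rw [← sub_pos, caputoWeight_zero_sub_one hα1 hτ]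
  exact div_pos (sub_pos.2 (Real.rpow_lt_self_of_one_lt one_lt_two (by linarith)))
    (mul_pos (Real.rpow_pos_of_pos hτ α) (Real.Gamma_pos_of_pos (by linarith)))

end caputoWeight

/-- Lemma 2, inequality (23):
`y^{j} Δ^α y ≥ (1/2) Δ^α(y²) − (τ^α Γ(2-α)/(2(2 − 2^{1-α}))) (Δ^α y)²`. -/
theorem discrete_caputo_ineq_lower (α τ : ℝ) (hα0 : 0 < α) (hα1 : α < 1)
    (hτ : 0 < τ) (y : ℕ → ℝ) :
    ∀ j : ℕ,
      y j * dCaputo α τ y j ≥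
        (1 / 2) * dCaputo α τ (fun n => (y n) ^ 2) j -
          (τ ^ α * Real.Gamma (2 - α) / (2 * (2 - 2 ^ (1 - α)))) *
            (dCaputo α τ y j) ^ 2 := by
  intro j
  have hb := caputoWeight_antitone hα0.le hα1.le hτ.le
  have key := half_weightedDiff_sq_sub_le (w := fun s => caputoWeight α τ (j - s)) (j := j)
    (caputoWeight_nonneg hα1.le hτ.le _) ((hb.comp antitone_const_tsub).monotoneOn _)
    (fun s hs => hb (show 1 ≤ j - s by omega)) (caputoWeight_one_pos hα1 hτ)
    (by rw [Nat.sub_self]; exact caputoWeight_one_lt_zero hα0 hα1 hτ) y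
  rw [Nat.sub_self, caputoWeight_zero_sub_one hα1 hτ, div_eq_mul_inv _ (2 * _)] at key
  rw [show τ ^ α * Real.Gamma (2 - α) / (2 * (2 - 2 ^ (1 - α))) =
    (2 * ((2 - 2 ^ (1 - α)) / (τ ^ α * Real.Gamma (2 - α))))⁻¹ by field_simp]
  simp only [dCaputo_eq_weightedDiff]
  linarith
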